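/- Suppose the incidence graph of a projective plane of order q has a resolving partition with r classes consisting only of points, s classes consisting only of lines, and t mixed classes (containing both a point and a line). Then (s+t)·2^{r+t-1} ≥ q²+q+1. -/

import Mathlib

/-!
Seen from a line `l`, a class `T` not containing `l` is at distance 1 if it contains a point of
`l`, and otherwise at distance 2 or 3 according as it contains a line or not. So two lines of the
same class are told apart only by which classes contain a point of them, and those classes are
among the `r + t` classes containing points. Since any two lines meet, these sets of classes form
an intersecting family, which has at most `2 ^ (r + t - 1)` members. Every line lies in one of
the `s + t` classes containing lines, whence `q² + q + 1 ≤ (s + t) * 2 ^ (r + t - 1)`.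
-/

open Configuration

/-- The incidence (Levi) graph of a point-line geometry. -/
def incGraph (P L : Type*) [Membership P L] : SimpleGraph (P ⊕ L) where
  Adj x y := match x, y with
    | Sum.inl p, Sum.inr l => p ∈ l
    | Sum.inr l, Sum.inl p => p ∈ l
    | _, _ => False
  symm := ⟨by rintro (p | l) (p' | l') h <;> simp_all⟩
  loopless := ⟨by rintro (p | l) h <;> simp_all⟩

/-- Distance from a vertex to a set of vertices (minimum distance to an element). -/
noncomputable def setDist {V : Type*} (G : SimpleGraph V) (v : V) (S : Set V) : ℕ :=
  sInf (G.dist v '' S)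

/-- An indexed family of sets is a resolving partition of the vertex set of `G`:
the classes are nonempty, pairwise disjoint, cover `V`, and the distance vectors
`i ↦ d(v, S i)` are pairwise distinct. -/
def IsResolvingPartition {V ι : Type*} (G : SimpleGraph V) (S : ι → Set V) : Prop :=
  (∀ i, (S i).Nonempty) ∧ (Pairwise fun i j => Disjoint (S i) (S j)) ∧
    (⋃ i, S i) = Set.univ ∧
    ∀ u v : V, (∀ i, setDist G u (S i) = setDist G v (S i)) → u = v

/-- The partition dimension of a graph. -/
noncomputable def partitionDim {V : Type*} (G : SimpleGraph V) : ℕ :=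
  sInf {k | ∃ S : Fin k → Set V, IsResolvingPartition G S}

/-- A set of vertices is a resolving set for `G`. -/
def IsResolvingSet {V : Type*} (G : SimpleGraph V) (W : Set V) : Prop :=
  ∀ u v : V, (∀ w ∈ W, G.dist u w = G.dist v w) → u = v

/-- The metric dimension of a graph. -/
noncomputable def metricDim {V : Type*} (G : SimpleGraph V) : ℕ :=
  sInf {k | ∃ W : Set V, W.ncard = k ∧ IsResolvingSet G W}

section SetDist

variable {V : Type*} {G : SimpleGraph V} {v : V} {T : Set V}

theorem setDist_eq_of_mem_of_forall_le {x : V} {d : ℕ} (hx : x ∈ T) (hd : G.dist v x = d)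
    (h : ∀ y ∈ T, d ≤ G.dist v y) : setDist G v T = d :=
  le_antisymm (hd ▸ Nat.sInf_le ⟨x, hx, rfl⟩)
    (le_csInf ⟨_, x, hx, rfl⟩ (by rintro _ ⟨y, hy, rfl⟩; exact h y hy))

theorem setDist_of_mem (hv : v ∈ T) : setDist G v T = 0 :=
  setDist_eq_of_mem_of_forall_le hv SimpleGraph.dist_self fun _ _ => Nat.zero_le _

theorem setDist_empty : setDist G v ∅ = 0 := by
  simp [setDist]

end SetDist

theorem Configuration.ProjectivePlane.exists_mem_and_mem {P L : Type*} [Membership P L]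
    [ProjectivePlane P L] (l l' : L) : ∃ p : P, p ∈ l ∧ p ∈ l' := by
  by_cases hll' : l = l'
  · subst hll'
    obtain ⟨-, p₂, -, -, l₂, -, -, -, -, hp₂, -⟩ := exists_config (P := P) (L := L)
    by_cases hl : l = l₂
    · exact ⟨p₂, hl ▸ hp₂, hl ▸ hp₂⟩
    · exact ⟨_, (HasPoints.mkPoint_ax hl).1, (HasPoints.mkPoint_ax hl).1⟩
  · exact ⟨_, HasPoints.mkPoint_ax hll'⟩

section IncidenceGraph

variable {P L : Type*} [Membership P L]

@[simp]
theorem incGraph_adj_inl_inr {p : P} {l : L} : (incGraph P L).Adj (.inl p) (.inr l) ↔ p ∈ l :=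
  Iff.rfl

@[simp]
theorem incGraph_adj_inr_inl {p : P} {l : L} : (incGraph P L).Adj (.inr l) (.inl p) ↔ p ∈ l :=
  Iff.rfl

theorem incGraph_walk_length_even_iff {x y : P ⊕ L} (w : (incGraph P L).Walk x y) :
    Even w.length ↔ x.isLeft = y.isLeft := by
  induction w with
  | nil => simp
  | @cons a b c hab w ih =>
    have hside : a.isLeft = !b.isLeft := by
      rcases a with p | l <;> rcases b with p' | l' <;> simp_all [incGraph]
    rw [SimpleGraph.Walk.length_cons, Nat.even_add_one, ih, hside]
    cases b.isLeft <;> cases c.isLeft <;> simp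

theorem incGraph_dist_even_iff {x y : P ⊕ L} (h : (incGraph P L).Reachable x y) :
    Even ((incGraph P L).dist x y) ↔ x.isLeft = y.isLeft := by
  obtain ⟨w, hw⟩ := h.exists_walk_length_eq_dist
  rw [← hw, incGraph_walk_length_even_iff]

theorem incGraph_dist_inr_inl_of_mem {p : P} {l : L} (h : p ∈ l) :
    (incGraph P L).dist (.inr l) (.inl p) = 1 :=
  SimpleGraph.dist_eq_one_iff_adj.mpr h

theorem incGraph_dist_inr_inr [HasPoints P L] {l l' : L} (h : l ≠ l') :
    (incGraph P L).dist (.inr l) (.inr l') = 2 := by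
  have hp := HasPoints.mkPoint_ax (P := P) h
  let w : (incGraph P L).Walk (.inr l) (.inr l') :=
    .cons (incGraph_adj_inr_inl.mpr hp.1) (.cons (incGraph_adj_inl_inr.mpr hp.2) .nil)
  have hle : _ ≤ 2 := SimpleGraph.dist_le w
  have hne : (incGraph P L).dist (.inr l) (.inr l') ≠ 0 := by
    simpa [w.reachable.dist_eq_zero_iff] using h
  obtain ⟨k, hk⟩ := (incGraph_dist_even_iff w.reachable).mpr rfl
  omega

theorem incGraph_dist_inr_inl_of_notMem [ProjectivePlane P L] {p : P} {l : L} (h : p ∉ l) :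
    (incGraph P L).dist (.inr l) (.inl p) = 3 := by
  obtain ⟨x, hx, -⟩ := ProjectivePlane.exists_mem_and_mem (P := P) l l
  have hm := HasLines.mkLine_ax (L := L) (show p ≠ x by rintro rfl; exact h hx)
  let w : (incGraph P L).Walk (.inr l) (.inl p) :=
    .cons (incGraph_adj_inr_inl.mpr hx) (.cons (incGraph_adj_inl_inr.mpr hm.2)
      (.cons (incGraph_adj_inr_inl.mpr hm.1) .nil))
  have hle : _ ≤ 3 := SimpleGraph.dist_le w
  have hne : (incGraph P L).dist (.inr l) (.inl p) ≠ 1 :=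
    fun h1 => h (SimpleGraph.dist_eq_one_iff_adj.mp h1)
  have hodd : ¬ Even ((incGraph P L).dist (.inr l) (.inl p)) := by
    simp [incGraph_dist_even_iff w.reachable]
  obtain ⟨k, hk⟩ := Nat.not_even_iff_odd.mp hodd
  omega

open Classical in
theorem setDist_inr_of_notMem [ProjectivePlane P L] {l : L} {T : Set (P ⊕ L)} (hT : T.Nonempty)
    (hl : .inr l ∉ T) :
    setDist (incGraph P L) (.inr l) T =
      if ∃ p ∈ l, .inl p ∈ T then 1 else if ∃ l', .inr l' ∈ T then 2 else 3 := by
  have hpoint (p : P) : (incGraph P L).dist (.inr l) (.inl p) = if p ∈ l then 1 else 3 := by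
    split_ifs with hp
    exacts [incGraph_dist_inr_inl_of_mem hp, incGraph_dist_inr_inl_of_notMem hp]
  have hline {l' : L} (hl' : .inr l' ∈ T) : (incGraph P L).dist (.inr l) (.inr l') = 2 :=
    incGraph_dist_inr_inr (by rintro rfl; exact hl hl')
  split_ifs with hmeet hother
  · obtain ⟨p, hp, hpT⟩ := hmeet
    refine setDist_eq_of_mem_of_forall_le hpT (incGraph_dist_inr_inl_of_mem hp) ?_
    rintro (p' | l') hx
    · rw [hpoint]; split_ifs <;> omega
    · rw [hline hx]; omega
  · obtain ⟨l', hl'⟩ := hother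
    refine setDist_eq_of_mem_of_forall_le hl' (hline hl') ?_
    rintro (p' | l'') hx
    · rw [hpoint, if_neg fun hp' => hmeet ⟨p', hp', hx⟩]; omega
    · rw [hline hx]
  · obtain ⟨p | l', hx⟩ := hT
    · refine setDist_eq_of_mem_of_forall_le hx
        (incGraph_dist_inr_inl_of_notMem fun hp => hmeet ⟨p, hp, hx⟩) ?_
      rintro (p' | l'') hy
      · rw [hpoint, if_neg fun hp' => hmeet ⟨p', hp', hy⟩]
      · exact absurd ⟨l'', hy⟩ hother
    · exact absurd ⟨l', hx⟩ hother

open Classical in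
theorem setDist_inr_eq_of_iff [ProjectivePlane P L] {l l' : L} {T : Set (P ⊕ L)}
    (hmem : .inr l ∈ T ↔ .inr l' ∈ T)
    (hmeet : (∃ p ∈ l, .inl p ∈ T) ↔ (∃ p ∈ l', .inl p ∈ T)) :
    setDist (incGraph P L) (.inr l) T = setDist (incGraph P L) (.inr l') T := by
  rcases T.eq_empty_or_nonempty with rfl | hT
  · rw [setDist_empty, setDist_empty]
  by_cases hl : .inr l ∈ T
  · rw [setDist_of_mem hl, setDist_of_mem (hmem.mp hl)]
  · rw [setDist_inr_of_notMem hT hl, setDist_inr_of_notMem hT (hmem.not.mp hl),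
      if_congr hmeet rfl rfl]

end IncidenceGraph

theorem Set.Intersecting.card_le_two_pow {κ : Type*} [Fintype κ] [DecidableEq κ]
    {A : Finset (Finset κ)} (hA : (A : Set (Finset κ)).Intersecting) :
    A.card ≤ 2 ^ (Fintype.card κ - 1) := by
  have h := hA.card_le
  rw [Fintype.card_finset] at h
  rcases Nat.eq_zero_or_eq_succ_pred (Fintype.card κ) with h0 | hsucc
  · rw [h0] at h ⊢
    omega
  · rw [hsucc, pow_succ] at h
    simp only [Nat.pred_eq_sub_one] at h
    omega

theorem Fintype.card_le_mul_two_pow_of_intersecting {L β κ : Type*} [Fintype L] [Fintype β]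
    [Fintype κ] (c : β → Finset L) (hc : ∀ l, ∃ b, l ∈ c b) (f : L → Finset κ)
    (hinj : ∀ b, Set.InjOn f (c b)) (hf : ∀ l l', ¬ Disjoint (f l) (f l')) :
    Fintype.card L ≤ Fintype.card β * 2 ^ (Fintype.card κ - 1) := by
  classical
  have hfiber (b : β) : (c b).card ≤ 2 ^ (Fintype.card κ - 1) := by
    rw [← Finset.card_image_of_injOn (hinj b)]
    refine Set.Intersecting.card_le_two_pow ?_
    rw [Finset.coe_image]
    rintro _ ⟨l, -, rfl⟩ _ ⟨l', -, rfl⟩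
    exact hf l l'
  calc Fintype.card L = (Finset.univ : Finset L).card := Finset.card_univ.symm
    _ ≤ (Finset.univ.biUnion c).card :=
        Finset.card_le_card fun l _ => Finset.mem_biUnion.mpr (by simpa using hc l)
    _ ≤ ∑ b, (c b).card := Finset.card_biUnion_le
    _ ≤ ∑ _b : β, 2 ^ (Fintype.card κ - 1) := Finset.sum_le_sum fun b _ => hfiber b
    _ = Fintype.card β * 2 ^ (Fintype.card κ - 1) := by simp

namespace IsResolvingPartition

section

variable {V ι : Type*} {G : SimpleGraph V} {S : ι → Set V}

theorem exists_mem (hS : IsResolvingPartition G S) (v : V) : ∃ i, v ∈ S i :=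
  Set.mem_iUnion.mp (hS.2.2.1 ▸ Set.mem_univ v)

theorem mem_iff_of_mem (hS : IsResolvingPartition G S) {u v : V} {b : ι} (hu : u ∈ S b)
    (hv : v ∈ S b) (i : ι) : u ∈ S i ↔ v ∈ S i := by
  have hclass {x : V} (hx : x ∈ S b) (hxi : x ∈ S i) : i = b := by
    by_contra hib
    exact Set.disjoint_left.mp (hS.2.1 hib) hxi hx
  exact ⟨fun hui => hclass hu hui ▸ hv, fun hvi => hclass hv hvi ▸ hu⟩

end

variable {P L ι : Type*} [Membership P L] [ProjectivePlane P L] {S : ι → Set (P ⊕ L)}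

theorem eq_of_mem_of_meets_iff (hS : IsResolvingPartition (incGraph P L) S) {l l' : L} {b : ι}
    (hl : .inr l ∈ S b) (hl' : .inr l' ∈ S b)
    (hmeet : ∀ i, (∃ p ∈ l, .inl p ∈ S i) ↔ (∃ p ∈ l', .inl p ∈ S i)) : l = l' :=
  Sum.inr_injective <| hS.2.2.2 _ _ fun i =>
    setDist_inr_eq_of_iff (hS.mem_iff_of_mem hl hl' i) (hmeet i)

theorem card_lines_le [Fintype L] {κ β : Type*} [Fintype κ] [Fintype β]
    (hS : IsResolvingPartition (incGraph P L) S) (e : κ → ι) (g : β → ι)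
    (hlines : ∀ l : L, ∃ b, .inr l ∈ S (g b))
    (hpoints : ∀ (p : P) i, .inl p ∈ S i → ∃ k, e k = i) :
    Fintype.card L ≤ Fintype.card β * 2 ^ (Fintype.card κ - 1) := by
  classical
  refine Fintype.card_le_mul_two_pow_of_intersecting
    (fun b => Finset.univ.filter fun l => .inr l ∈ S (g b)) (by simpa using hlines)
    (fun l => Finset.univ.filter fun k => ∃ p ∈ l, .inl p ∈ S (e k)) ?_ ?_
  · intro b l hl l' hl' htrace
    simp only [Finset.coe_filter, Finset.mem_univ, true_and, Set.mem_ofPred_eq] at hl hl'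
    refine hS.eq_of_mem_of_meets_iff hl hl' fun i => ?_
    by_cases hi : ∃ k, e k = i
    · obtain ⟨k, rfl⟩ := hi
      simpa using Finset.ext_iff.mp htrace k
    · have hno (m : L) : ¬ ∃ p ∈ m, .inl p ∈ S i :=
        fun ⟨p, _, hp⟩ => hi (hpoints p i hp)
      exact iff_of_false (hno l) (hno l')
  · intro l l'
    obtain ⟨p, hpl, hpl'⟩ := ProjectivePlane.exists_mem_and_mem (P := P) l l'
    obtain ⟨i, hi⟩ := hS.exists_mem (.inl p)
    obtain ⟨k, rfl⟩ := hpoints p i hi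
    exact Finset.not_disjoint_iff.mpr
      ⟨k, by simpa using ⟨p, hpl, hi⟩, by simpa using ⟨p, hpl', hi⟩⟩

end IsResolvingPartition

theorem resolving_partition_lower_bound_lines_general (P L : Type*) [Membership P L] [Fintype P]
    [Fintype L] [ProjectivePlane P L] (q : ℕ) (hq : ProjectivePlane.order P L = q)
    (r s t : ℕ) (S : Fin r ⊕ Fin s ⊕ Fin t → Set (P ⊕ L))
    (hres : IsResolvingPartition (incGraph P L) S)
    (hpt : ∀ i : Fin r, S (Sum.inl i) ⊆ Set.range Sum.inl)
    (hln : ∀ j : Fin s, S (Sum.inr (Sum.inl j)) ⊆ Set.range Sum.inr) :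
    q ^ 2 + q + 1 ≤ (s + t) * 2 ^ (r + t - 1) := by
  have hlines (l : L) : ∃ b : Fin s ⊕ Fin t, .inr l ∈ S (.inr b) := by
    obtain ⟨i | b, hi⟩ := hres.exists_mem (.inr l)
    · obtain ⟨p, hp⟩ := hpt i hi
      cases hp
    · exact ⟨b, hi⟩
  have hpoints (p : P) (i) (hi : .inl p ∈ S i) :
      ∃ k : Fin r ⊕ Fin t, Sum.elim .inl (.inr ∘ .inr) k = i := by
    rcases i with a | j | m
    · exact ⟨.inl a, rfl⟩
    · obtain ⟨l, hl⟩ := hln j hi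
      cases hl
    · exact ⟨.inr m, rfl⟩
  have h := hres.card_lines_le _ _ hlines hpoints
  rw [ProjectivePlane.card_lines P L, hq] at h
  simpa using h

/-- If the incidence graph of a projective plane of order `q` has a resolving partition
with `r` point-only classes, `s` line-only classes and `t` mixed classes, then
`(s+t) * 2^(r+t-1) ≥ q² + q + 1`. -/
theorem resolving_partition_lower_bound_lines (P L : Type*) [Membership P L] [Fintype P]
    [Fintype L] [ProjectivePlane P L] (q : ℕ) (hq : ProjectivePlane.order P L = q)
    (h2 : 2 ≤ q) (r s t : ℕ) (S : Fin r ⊕ Fin s ⊕ Fin t → Set (P ⊕ L))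
    (hres : IsResolvingPartition (incGraph P L) S)
    (hpt : ∀ i : Fin r, S (Sum.inl i) ⊆ Set.range Sum.inl)
    (hln : ∀ j : Fin s, S (Sum.inr (Sum.inl j)) ⊆ Set.range Sum.inr)
    (hmix : ∀ m : Fin t, (∃ p : P, Sum.inl p ∈ S (Sum.inr (Sum.inr m))) ∧
      (∃ l : L, Sum.inr l ∈ S (Sum.inr (Sum.inr m)))) :
    q ^ 2 + q + 1 ≤ (s + t) * 2 ^ (r + t - 1) :=
  resolving_partition_lower_bound_lines_general P L q hq r s t S hres hpt hln
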